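/- arXiv:1810.01691 — 3 statements merged into one kernel-verified Lean document; each statement's English description precedes it below -/
import Mathlib

section
/- Let (P_n) and (Q_n) be sequences of monic polynomials related by P_n + Σ_{i=1}^N r_{i,n} P_{n-i} = Q_n + Σ_{i=1}^M s_{i,n} Q_{n-i} for all n ≥ 0, and suppose (P_n) is orthogonal with respect to the linear functional u. For n ≥ M-1 let B̃_n be the M×M matrix with (j,k) entry ⟨P̄_{M-k} u, Q_{n-j+1}⟩ (where P̄_i = P_i/⟨u, P_i²⟩). Then det B̃_n = (-1)^M s_{M,n} · det B̃_{n-1} for all n ≥ M+N. -/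
open Polynomial

/-!
Pairing the relation between `P` and `Q` at index `n` with `P k` for `k < M ≤ n - N`,
orthogonality kills every `P`-term, so for each column the sequence `t ↦ ⟨P̄ₖ u, Q t⟩`
obeys the `M`-term recurrence with coefficients `-s i n` at `t = n`. The rows of `B̃ₙ`
are therefore those of `B̃ₙ₋₁` shifted down by one, with a new first row that is a linear
combination of them: `B̃ₙ = Cₙ B̃ₙ₋₁` for a companion matrix `Cₙ` of determinant
`(-1) ^ M * s M n`.
-/

namespace Matrix

variable {R : Type*} [CommRing R] {m : ℕ}

/-- The matrix advancing a window `(x t, x (t - 1), …, x (t - m))` of a sequence obeying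
`x (t + 1) = ∑ i, c i * x (t - i)` by one step. -/
def companion (c : Fin (m + 1) → R) : Matrix (Fin (m + 1)) (Fin (m + 1)) R :=
  of fun j i => if j = 0 then c i else if (i : ℕ) + 1 = j then 1 else 0

theorem det_companion (c : Fin (m + 1) → R) : (companion c).det = (-1) ^ m * c (Fin.last m) := by
  rw [det_succ_column _ (Fin.last m), Finset.sum_eq_single 0]
  · have hminor : (companion c).submatrix Fin.succ (Fin.last m).succAbove = 1 := by
      ext a b
      simp only [submatrix_apply, companion, of_apply, Fin.succ_ne_zero, if_false,
        Fin.succAbove_last, Fin.val_castSucc, Fin.val_succ, add_left_inj, Fin.val_inj, one_apply,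
        eq_comm]
    rw [Fin.succAbove_zero, hminor, det_one]
    simp [companion]
  · intro j _ hj
    have : ¬ m + 1 = (j : ℕ) := by omega
    simp [companion, hj, this]
  · simp

theorem companion_mul_apply_zero (c : Fin (m + 1) → R) {ι : Type*} (A : Matrix (Fin (m + 1)) ι R)
    (k : ι) : (companion c * A) 0 k = ∑ i, c i * A i k := by
  simp [mul_apply, companion]

theorem companion_mul_apply_succ (c : Fin (m + 1) → R) {ι : Type*} (A : Matrix (Fin (m + 1)) ι R)
    (j : Fin m) (k : ι) : (companion c * A) j.succ k = A j.castSucc k := by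
  rw [mul_apply, Finset.sum_eq_single j.castSucc]
  · simp [companion]
  · intro i _ hi
    have : (i : ℕ) ≠ j := fun h => hi (Fin.ext h)
    simp [companion, this]
  · simp

theorem det_eq_of_rows_eq_shift (c : Fin (m + 1) → R) (A B : Matrix (Fin (m + 1)) (Fin (m + 1)) R)
    (hzero : ∀ k, B 0 k = ∑ i, c i * A i k) (hsucc : ∀ (j : Fin m) k, B j.succ k = A j.castSucc k) :
    B.det = (-1) ^ m * c (Fin.last m) * A.det := by
  have hB : B = companion c * A := by
    ext j k
    cases j using Fin.cases with
    | zero => rw [hzero, companion_mul_apply_zero]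
    | succ j => rw [hsucc, companion_mul_apply_succ]
  rw [hB, det_mul, det_companion]

end Matrix

theorem Finset.sum_Icc_one_eq_sum_fin {β : Type*} [AddCommMonoid β] (n : ℕ) (f : ℕ → β) :
    ∑ i ∈ Finset.Icc 1 n, f i = ∑ i : Fin n, f (i + 1) := by
  rw [← Finset.Ico_add_one_right_eq_Icc, ← zero_add 1, ← Finset.sum_Ico_add', zero_add,
    ← Finset.range_eq_Ico, Fin.sum_univ_eq_sum_range (fun i => f (i + 1))]

theorem map_mul_eq_neg_sum_of_relation {R : Type*} [CommRing R] (u : R[X] →ₗ[R] R)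
    {P Q : ℕ → R[X]} {r s : ℕ → R} {N M n k : ℕ} (horth : ∀ j, k ≠ j → u (P k * P j) = 0)
    (hrel : P n + ∑ i ∈ Finset.Icc 1 N, r i • P (n - i)
        = Q n + ∑ i ∈ Finset.Icc 1 M, s i • Q (n - i))
    (hk : k + N < n) :
    u (P k * Q n) = -∑ i ∈ Finset.Icc 1 M, s i * u (P k * Q (n - i)) := by
  have h := congrArg (fun q => u (P k * q)) hrel
  simp only [mul_add, map_add, Finset.mul_sum, map_sum, mul_smul_comm, map_smul, smul_eq_mul] at h
  rw [horth n (by omega), Finset.sum_eq_zero fun i hi => ?_] at h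
  · linear_combination -h
  · rw [horth (n - i) (by simp only [Finset.mem_Icc] at hi; omega), mul_zero]

theorem det_Btilde_recursion_general
    (N M : ℕ) (hM : 1 ≤ M)
    (u : Polynomial ℂ →ₗ[ℂ] ℂ)
    (P Q : ℕ → Polynomial ℂ) (r s : ℕ → ℕ → ℂ)
    (horth : ∀ m n, m ≠ n → u (P m * P n) = 0)
    (hrel : ∀ n, P n + ∑ i ∈ Finset.Icc 1 N, r i n • P (n - i)
        = Q n + ∑ i ∈ Finset.Icc 1 M, s i n • Q (n - i))
    (Bt : ℕ → Matrix (Fin M) (Fin M) ℂ)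
    (hBt : ∀ n, ∀ j k : Fin M, Bt n j k
        = u (P (M - 1 - (k : ℕ)) * Q (n - (j : ℕ))) / u (P (M - 1 - (k : ℕ)) ^ 2)) :
    ∀ n, M + N ≤ n → (Bt n).det = (-1) ^ M * s M n * (Bt (n - 1)).det := by
  intro n hn
  obtain ⟨m, rfl⟩ := Nat.exists_eq_add_of_le' hM
  rw [Matrix.det_eq_of_rows_eq_shift (fun i => -s (i + 1) n) (Bt (n - 1)) (Bt n)]
  · simp [pow_succ]
  · intro k
    have hrec := map_mul_eq_neg_sum_of_relation u (horth (m - k)) (hrel n) (by omega)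
    simp only [hBt, Nat.add_sub_cancel, Fin.val_zero, Nat.sub_zero, hrec,
      Finset.sum_Icc_one_eq_sum_fin, Nat.sub_sub, add_comm 1, neg_div, Finset.sum_div,
      ← Finset.sum_neg_distrib, neg_mul, mul_div_assoc]
  · intro j k
    simp only [hBt, Fin.val_succ, Fin.val_castSucc, Nat.sub_sub, add_comm 1]

/-- Lemma 2.1 (b): determinant recursion for the matrices `B̃_n` when `(P n)` is
orthogonal with respect to `u`. -/
theorem det_Btilde_recursion
    (N M : ℕ) (hM : 1 ≤ M)
    (u : Polynomial ℂ →ₗ[ℂ] ℂ)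
    (P Q : ℕ → Polynomial ℂ) (r s : ℕ → ℕ → ℂ)
    (hPmonic : ∀ n, (P n).Monic) (hPdeg : ∀ n, (P n).degree = n)
    (hQmonic : ∀ n, (Q n).Monic) (hQdeg : ∀ n, (Q n).degree = n)
    (horth : ∀ m n, m ≠ n → u (P m * P n) = 0)
    (hreg : ∀ n, u (P n ^ 2) ≠ 0)
    (hrz : ∀ i n, n < i → r i n = 0) (hsz : ∀ i n, n < i → s i n = 0)
    (hrel : ∀ n, P n + ∑ i ∈ Finset.Icc 1 N, r i n • P (n - i)
        = Q n + ∑ i ∈ Finset.Icc 1 M, s i n • Q (n - i))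
    (Bt : ℕ → Matrix (Fin M) (Fin M) ℂ)
    (hBt : ∀ n, ∀ j k : Fin M, Bt n j k
        = u (P (M - 1 - (k : ℕ)) * Q (n - (j : ℕ))) / u (P (M - 1 - (k : ℕ)) ^ 2)) :
    ∀ n, M + N ≤ n → (Bt n).det = (-1) ^ M * s M n * (Bt (n - 1)).det :=
  det_Btilde_recursion_general N M hM u P Q r s horth hrel Bt hBt
end

section
/- Under the hypotheses of the previous statement (case M = 0: Q_n = P_n + Σ_{i=1}^N r_{i,n} P_{n-i}, both (P_n) and (Q_n) monic orthogonal, r_{N,N} ≠ 0), one has r_{N,n} ≠ 0 for every n ≥ N. -/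
open Polynomial

/-! Pairing `Q m` with `P (m - N)` under `u` isolates the last coefficient,
`u (Q m * P (m - N)) = r N m * u (P (m - N) ^ 2)`, while `Q m` is `u`-orthogonal to every
polynomial of degree `< m - N`. Since `X * P (m - N) = P (m + 1 - N) + (lower terms)`, the
three-term recurrence `X * Q (m + 1) = Q (m + 2) + b • Q (m + 1) + c • Q m` of the `v`-orthogonal
family, whose coefficient satisfies `c * v (Q m ^ 2) = v (Q (m + 1) ^ 2) ≠ 0`, gives
`r N (m + 1) * u (P (m + 1 - N) ^ 2) = c * (r N m * u (P (m - N) ^ 2))`; induction on `m`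
finishes the proof. -/

theorem Polynomial.degree_sub_coeff_smul_lt {R : Type*} [Ring R] {f p : R[X]} {n : ℕ}
    (hp : p.Monic) (hpn : p.degree = n) (hf : f.degree < ↑(n + 1)) :
    (f - f.coeff n • p).degree < n := by
  have hpn' : p.natDegree = n := natDegree_eq_of_degree_eq_some hpn
  rw [degree_lt_iff_coeff_zero]
  intro m hm
  rw [coeff_sub, coeff_smul, smul_eq_mul]
  rcases hm.eq_or_lt with rfl | hm
  · rw [← hpn', hp.coeff_natDegree, mul_one, sub_self]
  · rw [coeff_eq_zero_of_degree_lt (n := m) (hf.trans_le (by exact_mod_cast hm)),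
      coeff_eq_zero_of_degree_lt (n := m) (hpn ▸ by exact_mod_cast hm), mul_zero, sub_zero]

theorem Polynomial.Monic.degree_sub_lt {R : Type*} [Ring R] [Nontrivial R] {p q : R[X]} {n : ℕ}
    (hp : p.Monic) (hq : q.Monic) (hpn : p.degree = n) (hqn : q.degree = n) :
    (p - q).degree < n :=
  hpn ▸ degree_sub_lt_left (hpn.trans hqn.symm) hp.ne_zero
    (hp.leadingCoeff.trans hq.leadingCoeff.symm)

variable {K : Type*} [Field K]

structure IsMonicOrthogonal (u : K[X] →ₗ[K] K) (P : ℕ → K[X]) : Prop where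
  monic : ∀ n, (P n).Monic
  degree_eq : ∀ n, (P n).degree = n
  apply_mul_eq_zero : ∀ m n, m ≠ n → u (P m * P n) = 0

namespace IsMonicOrthogonal

variable {u : K[X] →ₗ[K] K} {P : ℕ → K[X]}

theorem apply_mul_eq_zero_of_degree_lt (hP : IsMonicOrthogonal u P) {n : ℕ} {q : K[X]}
    (hq : q.degree < n) : u (P n * q) = 0 := by
  suffices ∀ k ≤ n, ∀ q : K[X], q.degree < k → u (P n * q) = 0 from this n le_rfl q hq
  intro k
  induction k with
  | zero =>
    intro _ q hq
    rw [Nat.cast_zero, Nat.WithBot.lt_zero_iff, degree_eq_bot] at hq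
    rw [hq, mul_zero, map_zero]
  | succ k ih =>
    intro hk q hq
    have hlow := ih (by omega) _ (degree_sub_coeff_smul_lt (hP.monic k) (hP.degree_eq k) hq)
    rw [mul_sub, mul_smul_comm, map_sub, map_smul, hP.apply_mul_eq_zero n k (by omega),
      smul_zero, sub_zero] at hlow
    exact hlow

theorem eq_zero_of_forall_apply_mul_eq_zero (hP : IsMonicOrthogonal u P)
    (hreg : ∀ n, u (P n ^ 2) ≠ 0) {n : ℕ} {f : K[X]} (hf : f.degree < n)
    (h : ∀ j < n, u (f * P j) = 0) : f = 0 := by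
  induction n generalizing f with
  | zero => rwa [Nat.cast_zero, Nat.WithBot.lt_zero_iff, degree_eq_bot] at hf
  | succ n ih =>
    have hlow := degree_sub_coeff_smul_lt (hP.monic n) (hP.degree_eq n) hf
    have hcoeff : f.coeff n = 0 := by
      have hfn := h n n.lt_succ_self
      rw [← sub_add_cancel f (f.coeff n • P n), add_mul, map_add, mul_comm,
        hP.apply_mul_eq_zero_of_degree_lt hlow, zero_add, smul_mul_assoc, map_smul, ← sq,
        smul_eq_mul] at hfn
      exact (mul_eq_zero.mp hfn).resolve_right (hreg n)
    rw [hcoeff, zero_smul, sub_zero] at hlow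
    exact ih hlow fun j hj => h j (by omega)

theorem degree_X_mul (hP : IsMonicOrthogonal u P) (n : ℕ) : (X * P n).degree = ↑(n + 1) := by
  rw [mul_comm, degree_mul_X, hP.degree_eq, Nat.cast_succ]

theorem apply_mul_monic (hP : IsMonicOrthogonal u P) {n : ℕ} {p : K[X]} (hp : p.Monic)
    (hpn : p.degree = n) : u (P n * p) = u (P n ^ 2) := by
  rw [← sub_eq_zero, sq, ← map_sub, ← mul_sub,
    hP.apply_mul_eq_zero_of_degree_lt (hp.degree_sub_lt (hP.monic n) hpn (hP.degree_eq n))]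

theorem exists_X_mul_eq (hP : IsMonicOrthogonal u P) (hreg : ∀ n, u (P n ^ 2) ≠ 0) (n : ℕ) :
    ∃ b c : K, c ≠ 0 ∧ X * P (n + 1) = P (n + 2) + b • P (n + 1) + c • P n := by
  have h₂ : (X * P (n + 1) - P (n + 2)).degree < ↑(n + 2) :=
    (monic_X.mul (hP.monic _)).degree_sub_lt (hP.monic _) (hP.degree_X_mul _) (hP.degree_eq _)
  set b := (X * P (n + 1) - P (n + 2)).coeff (n + 1)
  have h₁ := degree_sub_coeff_smul_lt (hP.monic _) (hP.degree_eq _) h₂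
  set c := (X * P (n + 1) - P (n + 2) - b • P (n + 1)).coeff n
  have h₀ := degree_sub_coeff_smul_lt (hP.monic _) (hP.degree_eq _) h₁
  have hrec : X * P (n + 1) = P (n + 2) + b • P (n + 1) + c • P n := by
    have := hP.eq_zero_of_forall_apply_mul_eq_zero hreg h₀ fun j hj => by
      have hXj : u (P (n + 1) * (X * P j)) = 0 :=
        hP.apply_mul_eq_zero_of_degree_lt
          (by rw [hP.degree_X_mul]; exact_mod_cast Nat.succ_lt_succ hj)
      rw [mul_left_comm, ← mul_assoc] at hXj
      simp only [sub_mul, smul_mul_assoc, map_sub, map_smul, hXj,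
        hP.apply_mul_eq_zero (n + 2) j (by omega), hP.apply_mul_eq_zero (n + 1) j (by omega),
        hP.apply_mul_eq_zero n j (by omega), smul_zero, sub_zero]
    rwa [sub_sub, sub_sub, sub_eq_zero, ← add_assoc] at this
  -- pairing with `P n`: `c * u (P n ^ 2) = u (P (n + 1) * (X * P n)) = u (P (n + 1) ^ 2)`
  refine ⟨b, c, fun hc => hreg (n + 1) ?_, hrec⟩
  rw [← hP.apply_mul_monic (monic_X.mul (hP.monic n)) (hP.degree_X_mul n), mul_left_comm,
    ← mul_assoc, hrec]
  simp only [add_mul, smul_mul_assoc, map_add, map_smul, hc, zero_smul,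
    hP.apply_mul_eq_zero (n + 2) n (by omega), hP.apply_mul_eq_zero (n + 1) n (by omega),
    smul_zero, add_zero]

end IsMonicOrthogonal

section Perturbation

variable {u : K[X] →ₗ[K] K} {P Q : ℕ → K[X]} {N : ℕ} {r : ℕ → ℕ → K}

theorem apply_mul_eq_zero_of_degree_lt_sub (hP : IsMonicOrthogonal u P)
    (hQ : ∀ n, Q n = P n + ∑ i ∈ Finset.Icc 1 N, r i n • P (n - i)) {m : ℕ} {s : K[X]}
    (hs : s.degree < ↑(m - N)) : u (Q m * s) = 0 := by
  have hPs : ∀ k, m - N ≤ k → u (P k * s) = 0 := fun k hk =>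
    hP.apply_mul_eq_zero_of_degree_lt (hs.trans_le (by exact_mod_cast hk))
  rw [hQ, add_mul, Finset.sum_mul, map_add, map_sum, hPs m (Nat.sub_le m N), zero_add]
  refine Finset.sum_eq_zero fun i hi => ?_
  rw [smul_mul_assoc, map_smul, hPs (m - i) (by grind), smul_zero]

theorem apply_mul_sub_eq (hP : IsMonicOrthogonal u P)
    (hQ : ∀ n, Q n = P n + ∑ i ∈ Finset.Icc 1 N, r i n • P (n - i)) (hN : 1 ≤ N) {m : ℕ}
    (hm : N ≤ m) : u (Q m * P (m - N)) = r N m * u (P (m - N) ^ 2) := by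
  rw [hQ, add_mul, Finset.sum_mul, map_add, map_sum, hP.apply_mul_eq_zero m (m - N) (by omega),
    zero_add, Finset.sum_eq_single_of_mem N (Finset.mem_Icc.mpr ⟨hN, le_rfl⟩), smul_mul_assoc,
    map_smul, smul_eq_mul, sq]
  intro i hi hiN
  rw [smul_mul_assoc, map_smul, hP.apply_mul_eq_zero (m - i) (m - N) (by grind),
    smul_zero]

theorem apply_succ_mul_eq (hP : IsMonicOrthogonal u P)
    (hQ : ∀ n, Q n = P n + ∑ i ∈ Finset.Icc 1 N, r i n • P (n - i)) {m : ℕ} {b c : K}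
    (hrec : X * Q (m + 1) = Q (m + 2) + b • Q (m + 1) + c • Q m) (hm : N ≤ m) :
    u (Q (m + 1) * P (m + 1 - N)) = c * u (Q m * P (m - N)) := by
  have hX : u (Q (m + 1) * P (m + 1 - N)) = u (Q (m + 1) * (X * P (m - N))) := by
    have hlow := (hP.monic (m + 1 - N)).degree_sub_lt (monic_X.mul (hP.monic (m - N)))
      (hP.degree_eq _) (by rw [hP.degree_X_mul]; congr 2; omega)
    rw [← sub_eq_zero, ← map_sub, ← mul_sub, apply_mul_eq_zero_of_degree_lt_sub hP hQ hlow]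
  have hlow : ∀ k, m < k → u (Q k * P (m - N)) = 0 := fun k hk =>
    apply_mul_eq_zero_of_degree_lt_sub hP hQ (by rw [hP.degree_eq]; exact_mod_cast (by omega))
  rw [hX, mul_left_comm, ← mul_assoc, hrec]
  simp only [add_mul, smul_mul_assoc, map_add, map_smul, hlow (m + 2) (by omega),
    hlow (m + 1) (by omega), smul_eq_mul, mul_zero, zero_add]

end Perturbation

theorem case_M_zero_rN_ne_zero_general
    (N : ℕ) (hN : 1 ≤ N)
    (u v : Polynomial ℂ →ₗ[ℂ] ℂ)
    (P Q : ℕ → Polynomial ℂ) (r : ℕ → ℕ → ℂ)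
    (hPmonic : ∀ n, (P n).Monic) (hPdeg : ∀ n, (P n).degree = n)
    (hPorth : ∀ m n, m ≠ n → u (P m * P n) = 0) (hPreg : ∀ n, u (P n ^ 2) ≠ 0)
    (hQmonic : ∀ n, (Q n).Monic) (hQdeg : ∀ n, (Q n).degree = n)
    (hQorth : ∀ m n, m ≠ n → v (Q m * Q n) = 0) (hQreg : ∀ n, v (Q n ^ 2) ≠ 0)
    (hrNN : r N N ≠ 0)
    (hQdef : ∀ n, Q n = P n + ∑ i ∈ Finset.Icc 1 N, r i n • P (n - i)) :
    ∀ n, N ≤ n → r N n ≠ 0 := by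
  have hP : IsMonicOrthogonal u P := ⟨hPmonic, hPdeg, hPorth⟩
  have hQ : IsMonicOrthogonal v Q := ⟨hQmonic, hQdeg, hQorth⟩
  intro n hn
  induction n, hn using Nat.le_induction with
  | base => exact hrNN
  | succ m hm ih =>
    obtain ⟨b, c, hc, hrec⟩ := hQ.exists_X_mul_eq hQreg m
    have key := apply_succ_mul_eq hP hQdef hrec hm
    rw [apply_mul_sub_eq hP hQdef hN (hm.trans m.le_succ), apply_mul_sub_eq hP hQdef hN hm]
      at key
    intro hzero
    rw [hzero, zero_mul] at key
    exact mul_ne_zero hc (mul_ne_zero ih (hPreg _)) key.symm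

/-- Theorem 2.4 (b) (case M = 0): `r_{N,N} ≠ 0` implies `r_{N,n} ≠ 0` for all `n ≥ N`. -/
theorem case_M_zero_rN_ne_zero
    (N : ℕ) (hN : 1 ≤ N)
    (u v : Polynomial ℂ →ₗ[ℂ] ℂ)
    (P Q : ℕ → Polynomial ℂ) (r : ℕ → ℕ → ℂ)
    (hPmonic : ∀ n, (P n).Monic) (hPdeg : ∀ n, (P n).degree = n)
    (hPorth : ∀ m n, m ≠ n → u (P m * P n) = 0) (hPreg : ∀ n, u (P n ^ 2) ≠ 0)
    (hQmonic : ∀ n, (Q n).Monic) (hQdeg : ∀ n, (Q n).degree = n)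
    (hQorth : ∀ m n, m ≠ n → v (Q m * Q n) = 0) (hQreg : ∀ n, v (Q n ^ 2) ≠ 0)
    (hu1 : u 1 = 1) (hv1 : v 1 = 1)
    (hrz : ∀ i n, n < i → r i n = 0) (hrNN : r N N ≠ 0)
    (hQdef : ∀ n, Q n = P n + ∑ i ∈ Finset.Icc 1 N, r i n • P (n - i)) :
    ∀ n, N ≤ n → r N n ≠ 0 :=
  case_M_zero_rN_ne_zero_general N hN u v P Q r hPmonic hPdeg hPorth hPreg hQmonic hQdeg hQorth
    hQreg hrNN hQdef
end

section
/- Let (R_n) be a monic orthogonal polynomial sequence satisfying R_{n+1}(x) = (x - β*_n)R_n(x) - γ*_n R_{n-1}(x) with γ*_n ≠ 0 for n ≥ 1, and define a sequence of monic polynomials (Q_n) recursively by R_n = Q_n + Σ_{i=1}^M s_{i,n} Q_{n-i}, with s_{i,n} = 0 for i > n and s_{M,n} ≠ 0 for n ≥ M. Set β̃_n := β*_n + s_{1,n+1} - s_{1,n} and γ̃_n := γ*_n + s_{1,n}(β*_n - β̃_{n-1}) + s_{2,n+1} - s_{2,n}. Then (Q_n) satisfies Q_{n+1}(x) = (x -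 β̃_n)Q_n(x) - γ̃_n Q_{n-1}(x) with γ̃_n ≠ 0 for all n ≥ 1 if and only if B_{i,n} = 0 for n ≥ i, 2 ≤ i ≤ M-1, B_{M,n} = 0 for n ≥ M (when M ≥ 2), and B_{M+1,n} = 0 for n ≥ M+1, where B_{i,n} := s_{i+1,n} - s_{i+1,n+1} + s_{i,n}(β̃_{n-i} - β*_n) + s_{i-1,n}γ̃_{n+1-i} - s_{i-1,n-1}γ*_n, B_{M,n} := s_{M,n}(β̃_{n-M} - β*_n) + s_{M-1,n}γ̃_{n+1-M} - s_{M-1,n-1}γ*_n, and B_{M+1,n} := s_{M,n}γ̃_{n-M} - s_{M,n-1}γ*_n. -/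
/-!
Let `D_k := Q_{k+1} - (X - β̃_k) Q_k + γ̃_k Q_{k-1}` (with `Q_{-1} = 0`) be the defect of the
three-term recurrence for `(Q_n)`. Substituting `R_n = Σ_k s_{n-k,n} Q_k` into the recurrence of
`(R_n)` gives, for `n ≥ 1`,
  `Σ_{k ≤ n} s_{n-k,n} D_k = Σ_{k ≤ n-2} B_{n-k,n} Q_k`;
the definitions of `β̃` and `γ̃` are exactly what kills the coefficients of `Q_{n+1}`, `Q_n` and
`Q_{n-1}`. As `s_{0,n} = 1`, the left side is triangular in the `D_k`, and the `Q_k` are linearly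
independent, so all `D_k` vanish iff all `B_{j,n}` with `2 ≤ j ≤ n` do; those with `j ≥ M + 2`
vanish anyway. Finally `B_{M+1,n} = s_{M,n} γ̃_{n-M} - s_{M,n-1} γ*_n` with `s_{M,n-1} γ*_n ≠ 0`,
which forces `γ̃_{n-M} ≠ 0`.
-/

open Polynomial Finset

variable {K : Type*}

section Expansion

variable [Semiring K] {V : Type*} [AddCommMonoid V] [Module K V] {s : ℕ → ℕ → K} {Q : ℕ → V}

theorem add_sum_Icc_smul_eq_sum_range {M : ℕ} (hs0 : ∀ n, s 0 n = 1)
    (hsz : ∀ i n, n < i → s i n = 0) (hsM : ∀ i n, M < i → s i n = 0) (n : ℕ) :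
    Q n + ∑ i ∈ Icc 1 M, s i n • Q (n - i) = ∑ k ∈ range (n + 1), s (n - k) n • Q k := by
  have hvan : ∀ i ≥ min (M + 1) (n + 1), s i n • Q (n - i) = 0 := fun i hi ↦ by
    rcases lt_or_ge M i with h | h
    · rw [hsM i n h, zero_smul]
    · rw [hsz i n (by omega), zero_smul]
  calc Q n + ∑ i ∈ Icc 1 M, s i n • Q (n - i)
      = ∑ i ∈ range (M + 1), s i n • Q (n - i) := by
        rw [range_eq_Ico, sum_eq_sum_Ico_succ_bot (by omega : 0 < M + 1),
          Ico_add_one_right_eq_Icc, hs0, one_smul, Nat.sub_zero]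
    _ = ∑ i ∈ range (n + 1), s i n • Q (n - i) := by
        rw [eventually_constant_sum hvan (min_le_left _ _),
          eventually_constant_sum hvan (min_le_right _ _)]
    _ = ∑ k ∈ range (n + 1), s (n - k) n • Q k := by
        rw [← sum_range_reflect]
        refine sum_congr rfl fun k hk ↦ ?_
        rw [Nat.add_sub_cancel, Nat.sub_sub_self (by simpa [Nat.lt_succ_iff] using hk)]

theorem sum_range_smul_succ (hsz : ∀ i n, n < i → s i n = 0) (n : ℕ) :
    ∑ k ∈ range (n + 1), s (n - k) n • Q (k + 1) =
      ∑ k ∈ range (n + 2), s (n + 1 - k) n • Q k := by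
  rw [sum_range_succ' _ (n + 1), Nat.sub_zero, hsz _ _ n.lt_succ_self, zero_smul, add_zero]
  refine sum_congr rfl fun k _ ↦ ?_
  rw [Nat.add_sub_add_right]

end Expansion

section Defect

variable [CommRing K]

noncomputable def threeTermDefect (β γ : ℕ → K) (Q : ℕ → K[X]) : ℕ → K[X]
  | 0 => Q 1 - (X - C (β 0)) * Q 0
  | k + 1 => Q (k + 2) - (X - C (β (k + 1))) * Q (k + 1) + C (γ (k + 1)) * Q k

def defectCoeff (s : ℕ → ℕ → K) (βs γs βt γt : ℕ → K) (i n : ℕ) : K :=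
  s (i + 1) n - s (i + 1) (n + 1) + s i n * (βt (n - i) - βs n)
    + s (i - 1) n * γt (n + 1 - i) - s (i - 1) (n - 1) * γs n

theorem forall_threeTermDefect_eq_zero_iff {β γ : ℕ → K} {Q : ℕ → K[X]} :
    (∀ k, threeTermDefect β γ Q k = 0) ↔
      Q 1 = (X - C (β 0)) * Q 0 ∧
        ∀ n, 1 ≤ n → Q (n + 1) = (X - C (β n)) * Q n - C (γ n) * Q (n - 1) := by
  refine ⟨fun h ↦ ⟨sub_eq_zero.1 (h 0), fun n hn ↦ ?_⟩, fun ⟨h0, h⟩ k ↦ ?_⟩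
  · obtain ⟨k, rfl⟩ := Nat.exists_eq_add_of_le' hn
    have hk : Q (k + 2) - (X - C (β (k + 1))) * Q (k + 1) + C (γ (k + 1)) * Q k = 0 := h (k + 1)
    rw [Nat.add_sub_cancel]
    linear_combination hk
  · cases k with
    | zero => exact sub_eq_zero.2 h0
    | succ k => simp [threeTermDefect, h (k + 1) (by omega)]

theorem sum_smul_threeTermDefect_unfold (β γ : ℕ → K) (Q : ℕ → K[X]) (f : ℕ → K) (n : ℕ) :
    ∑ k ∈ range (n + 1), f k • threeTermDefect β γ Q k =
      ∑ k ∈ range (n + 1), (f k • Q (k + 1) - X * (f k • Q k) + (f k * β k) • Q k)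
        + ∑ k ∈ range n, (f (k + 1) * γ (k + 1)) • Q k := by
  rw [sum_range_succ', sum_range_succ' _ n, add_right_comm, ← sum_add_distrib]
  congr 1
  · refine sum_congr rfl fun k _ ↦ ?_
    simp only [threeTermDefect, smul_eq_C_mul, map_mul]
    ring
  · simp only [threeTermDefect, smul_eq_C_mul, map_mul]
    ring

variable {s : ℕ → ℕ → K} {Q R : ℕ → K[X]} {βs γs βt γt : ℕ → K}

theorem threeTermDefect_zero (hs0 : ∀ n, s 0 n = 1) (hsz : ∀ i n, n < i → s i n = 0)
    (hR : ∀ n, R n = ∑ k ∈ range (n + 1), s (n - k) n • Q k)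
    (hβt : βt 0 = βs 0 + s 1 1 - s 1 0) :
    threeTermDefect βt γt Q 0 = R 1 - (X - C (βs 0)) * R 0 := by
  simp only [threeTermDefect, hR, sum_range_succ, range_zero, sum_empty, hs0, hβt,
    hsz 1 0 Nat.zero_lt_one, Nat.sub_zero, Nat.sub_self, smul_eq_C_mul, map_sub, map_add, map_zero, map_one]
  ring

theorem sum_smul_threeTermDefect (hs0 : ∀ n, s 0 n = 1) (hsz : ∀ i n, n < i → s i n = 0)
    (hR : ∀ n, R n = ∑ k ∈ range (n + 1), s (n - k) n • Q k)
    (hβt : ∀ n, βt n = βs n + s 1 (n + 1) - s 1 n)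
    (hγt : ∀ n, 1 ≤ n → γt n = γs n + s 1 n * (βs n - βt (n - 1)) + s 2 (n + 1) - s 2 n)
    (m : ℕ) :
    ∑ k ∈ range (m + 2), s (m + 1 - k) (m + 1) • threeTermDefect βt γt Q k =
      R (m + 2) - (X - C (βs (m + 1))) * R (m + 1) + C (γs (m + 1)) * R m
        + ∑ k ∈ range m, defectCoeff s βs γs βt γt (m + 1 - k) (m + 1) • Q k := by
  have hcoeff : ∑ k ∈ range m, defectCoeff s βs γs βt γt (m + 1 - k) (m + 1) • Q k =
      ∑ k ∈ range m, s (m + 2 - k) (m + 1) • Q k - ∑ k ∈ range m, s (m + 2 - k) (m + 2) • Q k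
      + ∑ k ∈ range m, (s (m + 1 - k) (m + 1) * βt k) • Q k
      - βs (m + 1) • ∑ k ∈ range m, s (m + 1 - k) (m + 1) • Q k
      + ∑ k ∈ range m, (s (m - k) (m + 1) * γt (k + 1)) • Q k
      - γs (m + 1) • ∑ k ∈ range m, s (m - k) m • Q k := by
    simp only [smul_sum, ← sum_sub_distrib, ← sum_add_distrib]
    refine sum_congr rfl fun k hk ↦ ?_
    have hk : k < m := mem_range.1 hk
    rw [defectCoeff, show m + 1 - k + 1 = m + 2 - k by omega,
      show m + 1 - (m + 1 - k) = k by omega, show m + 1 - k - 1 = m - k by omega,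
      show m + 1 + 1 - (m + 1 - k) = k + 1 by omega, Nat.add_sub_cancel]
    module
  have hγ : γt (m + 1) = γs (m + 1) + s 1 (m + 1) * (βs (m + 1) - βt m) + s 2 (m + 2)
      - s 2 (m + 1) := hγt (m + 1) m.succ_pos
  rw [sum_smul_threeTermDefect_unfold, sum_add_distrib, sum_sub_distrib, ← mul_sum, ← hR (m + 1),
    sum_range_smul_succ hsz, hcoeff, sub_mul, C_mul', C_mul']
  generalize X * R (m + 1) = Y
  rw [hR (m + 2), hR (m + 1), hR m]
  simp only [sum_range_succ, Nat.sub_self, hs0, Nat.add_sub_add_right,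
    show m + 1 - m = 1 by omega, show m + 2 - m = 2 by omega, show m + 2 - (m + 1) = 1 by omega]
  linear_combination (norm := module) (hβt (m + 1)) • Q (m + 1) + hγ • Q m

theorem forall_threeTermDefect_eq_zero_iff_forall_defectCoeff [IsDomain K]
    (hs0 : ∀ n, s 0 n = 1) (hsz : ∀ i n, n < i → s i n = 0)
    (hR : ∀ n, R n = ∑ k ∈ range (n + 1), s (n - k) n • Q k)
    (hR1 : R 1 = (X - C (βs 0)) * R 0)
    (hRrec : ∀ n, 1 ≤ n → R (n + 1) = (X - C (βs n)) * R n - C (γs n) * R (n - 1))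
    (hβt : ∀ n, βt n = βs n + s 1 (n + 1) - s 1 n)
    (hγt : ∀ n, 1 ≤ n → γt n = γs n + s 1 n * (βs n - βt (n - 1)) + s 2 (n + 1) - s 2 n)
    (hQdeg : ∀ n, (Q n).degree = n) :
    (∀ k, threeTermDefect βt γt Q k = 0) ↔
      ∀ j n, 2 ≤ j → j ≤ n → defectCoeff s βs γs βt γt j n = 0 := by
  have key (m : ℕ) : ∑ k ∈ range (m + 2), s (m + 1 - k) (m + 1) • threeTermDefect βt γt Q k =
      ∑ k ∈ range m, defectCoeff s βs γs βt γt (m + 1 - k) (m + 1) • Q k := by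
    rw [sum_smul_threeTermDefect hs0 hsz hR hβt hγt, hRrec (m + 1) m.succ_pos,
      Nat.add_sub_cancel]
    ring
  constructor
  · intro hD j n hj hjn
    obtain ⟨m, rfl⟩ := Nat.exists_eq_add_of_le' (by omega : 1 ≤ n)
    have hsum : ∑ k ∈ range m, defectCoeff s βs γs βt γt (m + 1 - k) (m + 1) • Q k = 0 := by
      rw [← key, sum_eq_zero fun k _ ↦ by rw [hD, smul_zero]]
    have := linearIndependent_iff'.1 (Sequence.linearIndependent ⟨Q, hQdeg⟩) _ _ hsum
      (m + 1 - j) (mem_range.2 (by omega))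
    rwa [Nat.sub_sub_self hjn] at this
  · intro hB k
    induction k using Nat.strong_induction_on with
    | _ k ih =>
      cases k with
      | zero => rw [threeTermDefect_zero hs0 hsz hR (hβt 0), hR1, sub_self]
      | succ m =>
        have hsum := key m
        rw [sum_range_succ, sum_eq_zero fun k hk ↦ by rw [ih k (mem_range.1 hk), smul_zero],
          sum_eq_zero fun k hk ↦ by rw [hB _ _ (by have := mem_range.1 hk; omega) (by omega), zero_smul],
          Nat.sub_self, hs0, one_smul, zero_add] at hsum
        exact hsum

theorem defectCoeff_eq_zero_of_add_two_le {M j : ℕ} (hsM : ∀ i n, M < i → s i n = 0)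
    (hj : M + 2 ≤ j) (n : ℕ) : defectCoeff s βs γs βt γt j n = 0 := by
  simp [defectCoeff, hsM _ _ (by omega : M < j + 1), hsM _ _ (by omega : M < j),
    hsM _ _ (by omega : M < j - 1)]

theorem ne_zero_of_defectCoeff_succ_eq_zero [NoZeroDivisors K] {M m : ℕ}
    (hsM : ∀ i n, M < i → s i n = 0) (hsMne : ∀ n, M ≤ n → s M n ≠ 0)
    (hγs : ∀ n, 1 ≤ n → γs n ≠ 0) (hm : 1 ≤ m)
    (hB : defectCoeff s βs γs βt γt (M + 1) (m + M) = 0) : γt m ≠ 0 := by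
  intro hγt
  rw [defectCoeff, hsM _ _ (by omega : M < M + 1), Nat.add_sub_cancel,
    show m + M + 1 - (M + 1) = m by omega, hγt, hsM (M + 1 + 1) _ (by omega),
    hsM (M + 1 + 1) _ (by omega)] at hB
  have : s M (m + M - 1) * γs (m + M) = 0 := by linear_combination -hB
  exact mul_ne_zero (hsMne _ (by omega)) (hγs _ (by omega)) this

end Defect

theorem orthogonality_characterization_Qn_general
    (M : ℕ) (hM : 1 ≤ M)
    (βs γs βt γt : ℕ → ℂ) (s : ℕ → ℕ → ℂ)
    (R Q : ℕ → Polynomial ℂ)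
    (hR0 : R 0 = 1) (hR1 : R 1 = X - C (βs 0))
    (hRrec : ∀ n, 1 ≤ n → R (n + 1) = (X - C (βs n)) * R n - C (γs n) * R (n - 1))
    (hγs : ∀ n, 1 ≤ n → γs n ≠ 0)
    (hs0 : ∀ n, s 0 n = 1)
    (hsz : ∀ i n, n < i → s i n = 0)
    (hsM : ∀ i n, M < i → s i n = 0)
    (hsMne : ∀ n, M ≤ n → s M n ≠ 0)
    (hQdeg : ∀ n, (Q n).degree = n)
    (hrel : ∀ n, R n = Q n + ∑ i ∈ Finset.Icc 1 M, s i n • Q (n - i))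
    (hβt : ∀ n, βt n = βs n + s 1 (n + 1) - s 1 n)
    (hγt : ∀ n, 1 ≤ n → γt n = γs n + s 1 n * (βs n - βt (n - 1)) + s 2 (n + 1) - s 2 n)
    (B : ℕ → ℕ → ℂ)
    (hB : ∀ i n, B i n = s (i + 1) n - s (i + 1) (n + 1) + s i n * (βt (n - i) - βs n)
        + s (i - 1) n * γt (n + 1 - i) - s (i - 1) (n - 1) * γs n) :
    ((Q 1 = (X - C (βt 0)) * Q 0 ∧
        (∀ n, 1 ≤ n → Q (n + 1) = (X - C (βt n)) * Q n - C (γt n) * Q (n - 1))) ∧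
      (∀ n, 1 ≤ n → γt n ≠ 0))
    ↔ ((∀ i n, 2 ≤ i → i ≤ M - 1 → i ≤ n → B i n = 0) ∧
       (2 ≤ M → ∀ n, M ≤ n → B M n = 0) ∧
       (∀ n, M + 1 ≤ n → B (M + 1) n = 0)) := by
  obtain rfl : B = defectCoeff s βs γs βt γt := funext fun i ↦ funext (hB i)
  have hR n : R n = ∑ k ∈ range (n + 1), s (n - k) n • Q k :=
    (hrel n).trans (add_sum_Icc_smul_eq_sum_range hs0 hsz hsM n)
  rw [← forall_threeTermDefect_eq_zero_iff, forall_threeTermDefect_eq_zero_iff_forall_defectCoeff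
    hs0 hsz hR (by rw [hR1, hR0, mul_one]) hRrec hβt hγt hQdeg]
  constructor
  · rintro ⟨hB0, -⟩
    exact ⟨fun i n hi _ hin ↦ hB0 i n hi hin, fun hM2 n hn ↦ hB0 M n hM2 hn,
      fun n hn ↦ hB0 (M + 1) n (by omega) hn⟩
  · rintro ⟨hlow, hmid, htop⟩
    refine ⟨fun j n hj hjn ↦ ?_, fun m hm ↦
      ne_zero_of_defectCoeff_succ_eq_zero hsM hsMne hγs hm (htop (m + M) (by omega))⟩
    rcases (by omega : j ≤ M - 1 ∨ j = M ∨ j = M + 1 ∨ M + 2 ≤ j) with h | rfl | rfl | h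
    · exact hlow j n hj h hjn
    · exact hmid hj n hjn
    · exact htop n hjn
    · exact defectCoeff_eq_zero_of_add_two_le hsM h n

/-- Proposition 3.2: characterization of the orthogonality (three-term recurrence with
nonvanishing `γ̃_n`) of the sequence `(Q_n)` defined by `R_n = Q_n + Σ_{i=1}^M s_{i,n} Q_{n-i}`. -/
theorem orthogonality_characterization_Qn
    (M : ℕ) (hM : 1 ≤ M)
    (βs γs βt γt : ℕ → ℂ) (s : ℕ → ℕ → ℂ)
    (R Q : ℕ → Polynomial ℂ)
    (hR0 : R 0 = 1) (hR1 : R 1 = X - C (βs 0))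
    (hRrec : ∀ n, 1 ≤ n → R (n + 1) = (X - C (βs n)) * R n - C (γs n) * R (n - 1))
    (hγs : ∀ n, 1 ≤ n → γs n ≠ 0)
    (hs0 : ∀ n, s 0 n = 1)
    (hsz : ∀ i n, n < i → s i n = 0)
    (hsM : ∀ i n, M < i → s i n = 0)
    (hsMne : ∀ n, M ≤ n → s M n ≠ 0)
    (hQmonic : ∀ n, (Q n).Monic) (hQdeg : ∀ n, (Q n).degree = n)
    (hrel : ∀ n, R n = Q n + ∑ i ∈ Finset.Icc 1 M, s i n • Q (n - i))
    (hβt : ∀ n, βt n = βs n + s 1 (n + 1) - s 1 n)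
    (hγt : ∀ n, 1 ≤ n → γt n = γs n + s 1 n * (βs n - βt (n - 1)) + s 2 (n + 1) - s 2 n)
    (B : ℕ → ℕ → ℂ)
    (hB : ∀ i n, B i n = s (i + 1) n - s (i + 1) (n + 1) + s i n * (βt (n - i) - βs n)
        + s (i - 1) n * γt (n + 1 - i) - s (i - 1) (n - 1) * γs n) :
    ((Q 1 = (X - C (βt 0)) * Q 0 ∧
        (∀ n, 1 ≤ n → Q (n + 1) = (X - C (βt n)) * Q n - C (γt n) * Q (n - 1))) ∧
      (∀ n, 1 ≤ n → γt n ≠ 0))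
    ↔ ((∀ i n, 2 ≤ i → i ≤ M - 1 → i ≤ n → B i n = 0) ∧
       (2 ≤ M → ∀ n, M ≤ n → B M n = 0) ∧
       (∀ n, M + 1 ≤ n → B (M + 1) n = 0)) :=
  orthogonality_characterization_Qn_general M hM βs γs βt γt s R Q hR0 hR1 hRrec hγs hs0 hsz hsM
    hsMne hQdeg hrel hβt hγt B hB
end
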